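/- (Theorem 3.2, high-probability generalization bound.) Let ξ₁,…,ξ_N be i.i.d. samples from P*, P̂_N their empirical measure, τ_ε := (1+ε)·inf_{x∈𝒳} E_{P̂_N}[h(x,ξ)] (a.s. finite), and (x̂_N, k̂_N) a random pair that is a.s. RS-feasible for τ_ε with respect to P̂_N. Suppose r_N > 0 and β_N ∈ (0,1) satisfy P{ d_W(P*, P̂_N) > r_N } ≤ β_N. Then with probability at least 1 − β_N: E_{P*}[h(x̂_N,ξ)] − J* ≤ ε·J* + (2+ε)·L·r_N, where J* := inf_{x∈𝒳} E_{P*}[h(x,ξ)] is assumed finite. -/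

import Mathlib

/-! On the event `wDist P* P̂_N ≤ r`, the easy half of Kantorovich–Rubinstein duality (integrate the
Lipschitz bound against any coupling) moves every expectation by at most `L r` between `P*` and
`P̂_N`. Testing RS-feasibility at `P = P̂_N` itself, where the Wasserstein term vanishes, gives
`E_{P̂_N}[h(x̂, ·)] ≤ τ_ε ≤ (1 + ε) (J* + L r)`, hence
`E_{P*}[h(x̂, ·)] ≤ (1 + ε) J* + (2 + ε) L r`. The complementary event has probability at most `β`. -/

open MeasureTheory

noncomputable section

abbrev Vec (m : ℕ) := EuclideanSpace ℝ (Fin m)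

/-- A coupling of two Borel probability measures on `Vec m`. -/
def IsCoupling {m : ℕ} (γ : Measure (Vec m × Vec m)) (P Q : Measure (Vec m)) : Prop :=
  IsProbabilityMeasure γ ∧ γ.map Prod.fst = P ∧ γ.map Prod.snd = Q

/-- Type-1 Wasserstein distance: infimum of `∫ ‖ξ₁ - ξ₂‖₂ dγ` over couplings `γ`. -/
noncomputable def wDist {m : ℕ} (P Q : Measure (Vec m)) : ℝ :=
  sInf {c : ℝ | ∃ γ : Measure (Vec m × Vec m), IsCoupling γ P Q ∧ c = ∫ p, ‖p.1 - p.2‖ ∂γ}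

/-- `(x, k)` is RS-feasible for reference value `τ` with respect to `Phat`. -/
def RSFeasible {m : ℕ} {X : Type*} (h : X → Vec m → ℝ)
    (Phat : Measure (Vec m)) (τ : ℝ) (x : X) (k : ℝ) : Prop :=
  0 ≤ k ∧ ∀ P : Measure (Vec m), IsProbabilityMeasure P →
    Integrable (fun ξ => ‖ξ‖) P → (∫ ξ, h x ξ ∂P) - τ ≤ k * wDist P Phat

/-- Empirical measure `(1/N) ∑ δ_{x i}`. -/
noncomputable def empMeas {m N : ℕ} (xs : Fin N → Vec m) : Measure (Vec m) :=
  (N : ENNReal)⁻¹ • ∑ i : Fin N, Measure.dirac (xs i)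

lemma isProbabilityMeasure_empMeas {m N : ℕ} (hN : 0 < N) (xs : Fin N → Vec m) :
    IsProbabilityMeasure (empMeas xs) := by
  constructor
  simp [empMeas, ENNReal.inv_mul_cancel (Nat.cast_ne_zero.2 hN.ne')]

lemma integrable_empMeas {m N : ℕ} {E : Type*} [NormedAddCommGroup E] (hN : 0 < N)
    (f : Vec m → E) (xs : Fin N → Vec m) : Integrable f (empMeas xs) :=
  (integrable_finsetSum_measure.2 fun _ _ => integrable_dirac enorm_lt_top).smul_measure
    (ENNReal.inv_ne_top.2 (Nat.cast_ne_zero.2 hN.ne'))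

lemma LipschitzWith.integrable_of_integrable_norm {α E : Type*} [NormedAddCommGroup α]
    [MeasurableSpace α] [OpensMeasurableSpace α] [NormedAddCommGroup E]
    [SecondCountableTopologyEither α E] {μ : Measure α} [IsFiniteMeasure μ] {K : NNReal}
    {g : α → E} (hg : LipschitzWith K g) (hμ : Integrable (fun ξ => ‖ξ‖) μ) :
    Integrable g μ := by
  refine ((integrable_const ‖g 0‖).add (hμ.const_mul K)).mono'
    hg.continuous.aestronglyMeasurable (ae_of_all _ fun ξ => ?_)
  calc ‖g ξ‖ ≤ ‖g 0‖ + ‖g ξ - g 0‖ := norm_le_insert' _ _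
    _ ≤ ‖g 0‖ + K * ‖ξ‖ := by simpa using hg.norm_sub_le ξ 0

lemma wDist_nonneg {m : ℕ} (P Q : Measure (Vec m)) : 0 ≤ wDist P Q :=
  Real.sInf_nonneg <| by
    rintro _ ⟨γ, -, rfl⟩
    exact integral_nonneg fun _ => norm_nonneg _

lemma wDist_self {m : ℕ} (Q : Measure (Vec m)) [IsProbabilityMeasure Q] : wDist Q Q = 0 := by
  have hdiag : Measurable fun ξ : Vec m => (ξ, ξ) := measurable_id.prodMk measurable_id
  refine le_antisymm (csInf_le ?_ ⟨Q.map fun ξ => (ξ, ξ),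
    ⟨Measure.isProbabilityMeasure_map hdiag.aemeasurable, ?_, ?_⟩, ?_⟩) (wDist_nonneg Q Q)
  · refine ⟨0, ?_⟩
    rintro _ ⟨γ, -, rfl⟩
    exact integral_nonneg fun _ => norm_nonneg _
  · simp [Measure.map_map measurable_fst hdiag, Function.comp_def]
  · simp [Measure.map_map measurable_snd hdiag, Function.comp_def]
  · rw [integral_map hdiag.aemeasurable (f := fun p : Vec m × Vec m => ‖p.1 - p.2‖)
      (continuous_fst.sub continuous_snd).norm.aestronglyMeasurable]
    simp

lemma isCoupling_prod {m : ℕ} (P Q : Measure (Vec m)) [IsProbabilityMeasure P]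
    [IsProbabilityMeasure Q] : IsCoupling (P.prod Q) P Q :=
  ⟨inferInstance, by simp, by simp⟩

namespace IsCoupling

variable {m : ℕ} {γ : Measure (Vec m × Vec m)} {P Q : Measure (Vec m)}

lemma integral_sub_eq {g : Vec m → ℝ} (hγ : IsCoupling γ P Q) (hP : Integrable g P)
    (hQ : Integrable g Q) :
    ∫ ξ, g ξ ∂P - ∫ ξ, g ξ ∂Q = ∫ p, (g p.1 - g p.2) ∂γ := by
  obtain ⟨-, rfl, rfl⟩ := hγ
  rw [integral_map measurable_fst.aemeasurable hP.1, integral_map measurable_snd.aemeasurable hQ.1]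
  exact (integral_sub (hP.comp_measurable measurable_fst) (hQ.comp_measurable measurable_snd)).symm

lemma integrable_norm_sub (hγ : IsCoupling γ P Q) (hP : Integrable (fun ξ => ‖ξ‖) P)
    (hQ : Integrable (fun ξ => ‖ξ‖) Q) : Integrable (fun p : Vec m × Vec m => ‖p.1 - p.2‖) γ := by
  obtain ⟨-, rfl, rfl⟩ := hγ
  exact ((hP.comp_measurable measurable_fst).add (hQ.comp_measurable measurable_snd)).mono'
    (continuous_fst.sub continuous_snd).norm.aestronglyMeasurable
    (ae_of_all _ fun p => (norm_norm _).trans_le (norm_sub_le _ _))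

lemma abs_integral_sub_le [IsProbabilityMeasure P] [IsProbabilityMeasure Q] {K : NNReal}
    {g : Vec m → ℝ} (hγ : IsCoupling γ P Q) (hg : LipschitzWith K g)
    (hP : Integrable (fun ξ => ‖ξ‖) P) (hQ : Integrable (fun ξ => ‖ξ‖) Q) :
    |∫ ξ, g ξ ∂P - ∫ ξ, g ξ ∂Q| ≤ K * ∫ p, ‖p.1 - p.2‖ ∂γ := by
  rw [hγ.integral_sub_eq (hg.integrable_of_integrable_norm hP)
    (hg.integrable_of_integrable_norm hQ), ← integral_const_mul]
  refine (abs_integral_le_integral_abs).trans (integral_mono_of_nonneg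
    (ae_of_all _ fun _ => abs_nonneg _) ((hγ.integrable_norm_sub hP hQ).const_mul _)
    (ae_of_all _ fun p => ?_))
  simpa [Real.dist_eq, dist_eq_norm] using hg.dist_le_mul p.1 p.2

end IsCoupling

lemma abs_integral_sub_le_mul_wDist {m : ℕ} {P Q : Measure (Vec m)} [IsProbabilityMeasure P]
    [IsProbabilityMeasure Q] {K : NNReal} {g : Vec m → ℝ} (hg : LipschitzWith K g)
    (hP : Integrable (fun ξ => ‖ξ‖) P) (hQ : Integrable (fun ξ => ‖ξ‖) Q) :
    |∫ ξ, g ξ ∂P - ∫ ξ, g ξ ∂Q| ≤ K * wDist P Q := by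
  rw [wDist, ← smul_eq_mul, ← Real.sInf_smul_of_nonneg K.coe_nonneg]
  refine le_csInf (Set.Nonempty.smul_set ⟨_, P.prod Q, isCoupling_prod P Q, rfl⟩) ?_
  rintro _ ⟨_, ⟨γ, hγ, rfl⟩, rfl⟩
  exact hγ.abs_integral_sub_le hg hP hQ

lemma RSFeasible.integral_le {m : ℕ} {X : Type*} {h : X → Vec m → ℝ} {Q : Measure (Vec m)}
    [IsProbabilityMeasure Q] {τ : ℝ} {x : X} {k : ℝ} (hfeas : RSFeasible h Q τ x k)
    (hQ : Integrable (fun ξ => ‖ξ‖) Q) : ∫ ξ, h x ξ ∂Q ≤ τ := by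
  have := hfeas.2 Q inferInstance hQ
  rwa [wDist_self, mul_zero, sub_nonpos] at this

lemma RSFeasible.integral_sub_iInf_le {m : ℕ} {X : Type*} [Nonempty X] {h : X → Vec m → ℝ}
    {K : NNReal} (hh : ∀ x, LipschitzWith K (h x)) {P Q : Measure (Vec m)}
    [IsProbabilityMeasure P] [IsProbabilityMeasure Q] (hP : Integrable (fun ξ => ‖ξ‖) P)
    (hQ : Integrable (fun ξ => ‖ξ‖) Q) (hbdd : BddBelow (Set.range fun x => ∫ ξ, h x ξ ∂Q))
    {ε : ℝ} (hε : 0 ≤ 1 + ε) {x : X} {k r : ℝ}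
    (hfeas : RSFeasible h Q ((1 + ε) * ⨅ y, ∫ ξ, h y ξ ∂Q) x k) (hr : wDist P Q ≤ r) :
    ∫ ξ, h x ξ ∂P - ⨅ y, ∫ ξ, h y ξ ∂P ≤ ε * (⨅ y, ∫ ξ, h y ξ ∂P) + (2 + ε) * K * r := by
  have hdev (y : X) : |∫ ξ, h y ξ ∂P - ∫ ξ, h y ξ ∂Q| ≤ K * r :=
    (abs_integral_sub_le_mul_wDist (hh y) hP hQ).trans (mul_le_mul_of_nonneg_left hr K.coe_nonneg)
  have hinf : (⨅ y, ∫ ξ, h y ξ ∂Q) - K * r ≤ ⨅ y, ∫ ξ, h y ξ ∂P :=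
    le_ciInf fun y => by linarith [ciInf_le hbdd y, (abs_le.1 (hdev y)).1]
  have hemp : ∫ ξ, h x ξ ∂Q ≤ (1 + ε) * ((⨅ y, ∫ ξ, h y ξ ∂P) + K * r) :=
    (hfeas.integral_le hQ).trans (mul_le_mul_of_nonneg_left (by linarith) hε)
  linarith [(abs_le.1 (hdev x)).2]

lemma ofReal_one_sub_le_measure_of_ae_imp {Ω : Type*} [MeasurableSpace Ω] {μ : Measure Ω}
    [IsProbabilityMeasure μ] {G T : Set Ω} {β : ℝ} (hβ : 0 ≤ β) (hT : μ T ≤ ENNReal.ofReal β)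
    (hGT : ∀ᵐ ω ∂μ, ω ∉ T → ω ∈ G) : ENNReal.ofReal (1 - β) ≤ μ G := by
  have hGc : μ Gᶜ ≤ μ T := measure_mono_ae (hGT.mono fun _ h => not_imp_comm.1 h)
  rw [ENNReal.ofReal_sub _ hβ, ENNReal.ofReal_one, tsub_le_iff_right]
  calc 1 = μ (G ∪ Gᶜ) := by rw [Set.union_compl_self, measure_univ]
    _ ≤ μ G + μ Gᶜ := measure_union_le _ _
    _ ≤ μ G + ENNReal.ofReal β := by gcongr; exact hGc.trans hT

theorem high_probability_generalization_bound_general {m N : ℕ} (hN : 0 < N)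
    {X : Type*} [Nonempty X]
    {Ω : Type*} [MeasurableSpace Ω] (μ : Measure Ω) [IsProbabilityMeasure μ]
    (h : X → Vec m → ℝ) (L : ℝ) (hL : 0 ≤ L)
    (hLip : ∀ x ξ η, |h x ξ - h x η| ≤ L * ‖ξ - η‖)
    (Pstar : Measure (Vec m)) [IsProbabilityMeasure Pstar]
    (hPstarmom : Integrable (fun ξ => ‖ξ‖) Pstar)
    -- i.i.d. samples from Pstar
    (ξs : Fin N → Ω → Vec m)
    -- empirical measure
    (Phat : Ω → Measure (Vec m)) (hPhat : ∀ ω, Phat ω = empMeas (fun i => ξs i ω))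
    -- reference value
    (ε : ℝ) (hε : 0 < ε)
    (τ : Ω → ℝ) (hτ : ∀ ω, τ ω = (1 + ε) * ⨅ x, ∫ ξ, h x ξ ∂(Phat ω))
    (hfin : ∀ᵐ ω ∂μ, BddBelow (Set.range fun x => ∫ ξ, h x ξ ∂(Phat ω)))
    -- almost surely RS-feasible random pair
    (xhat : Ω → X) (khat : Ω → ℝ)
    (hfeas : ∀ᵐ ω ∂μ, RSFeasible h (Phat ω) (τ ω) (xhat ω) (khat ω))
    -- concentration of the empirical measure
    (r β : ℝ) (hβ0 : 0 < β)
    (htail : μ {ω | r < wDist Pstar (Phat ω)} ≤ ENNReal.ofReal β) :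
    ENNReal.ofReal (1 - β) ≤
      μ {ω | (∫ ξ, h (xhat ω) ξ ∂Pstar) - (⨅ x, ∫ ξ, h x ξ ∂Pstar) ≤
               ε * (⨅ x, ∫ ξ, h x ξ ∂Pstar) + (2 + ε) * L * r} := by
  have hK (x : X) : LipschitzWith L.toNNReal (h x) := LipschitzWith.of_dist_le_mul fun ξ η => by
    rw [Real.dist_eq, dist_eq_norm, Real.coe_toNNReal L hL]
    exact hLip x ξ η
  refine ofReal_one_sub_le_measure_of_ae_imp hβ0.le htail ?_
  filter_upwards [hfeas, hfin] with ω hfeasω hbddω hω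
  rw [hτ, hPhat] at hfeasω
  rw [hPhat] at hbddω
  simp only [not_lt, hPhat] at hω
  have := isProbabilityMeasure_empMeas hN fun i => ξs i ω
  have hbound := hfeasω.integral_sub_iInf_le hK hPstarmom (integrable_empMeas hN _ _) hbddω
    (by linarith) hω
  rwa [Real.coe_toNNReal L hL] at hbound

/-- Theorem 3.2, high-probability generalization bound: with probability
at least 1 - beta_N, E_{P*}[h(xhat_N,.)] - J* <= eps J* + (2+eps) L r_N. -/
theorem high_probability_generalization_bound {m N : ℕ} (hN : 0 < N)
    {X : Type*} [Nonempty X]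
    {Ω : Type*} [MeasurableSpace Ω] (μ : Measure Ω) [IsProbabilityMeasure μ]
    (h : X → Vec m → ℝ) (L : ℝ) (hL : 0 ≤ L)
    (hLip : ∀ x ξ η, |h x ξ - h x η| ≤ L * ‖ξ - η‖)
    (hInt : ∀ x (P : Measure (Vec m)), IsProbabilityMeasure P →
      Integrable (fun ξ => ‖ξ‖) P → Integrable (h x) P)
    (Pstar : Measure (Vec m)) [IsProbabilityMeasure Pstar]
    (hPstarmom : Integrable (fun ξ => ‖ξ‖) Pstar)
    -- i.i.d. samples from Pstar
    (ξs : Fin N → Ω → Vec m) (hmeas : ∀ i, Measurable (ξs i))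
    (hindep : ProbabilityTheory.iIndepFun ξs μ)
    (hdist : ∀ i, μ.map (ξs i) = Pstar)
    -- empirical measure
    (Phat : Ω → Measure (Vec m)) (hPhat : ∀ ω, Phat ω = empMeas (fun i => ξs i ω))
    -- reference value
    (ε : ℝ) (hε : 0 < ε)
    (τ : Ω → ℝ) (hτ : ∀ ω, τ ω = (1 + ε) * ⨅ x, ∫ ξ, h x ξ ∂(Phat ω))
    (hfin : ∀ᵐ ω ∂μ, BddBelow (Set.range fun x => ∫ ξ, h x ξ ∂(Phat ω)))
    (hfinPstar : BddBelow (Set.range fun x => ∫ ξ, h x ξ ∂Pstar))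
    -- almost surely RS-feasible random pair
    (xhat : Ω → X) (khat : Ω → ℝ)
    (hfeas : ∀ᵐ ω ∂μ, RSFeasible h (Phat ω) (τ ω) (xhat ω) (khat ω))
    -- concentration of the empirical measure
    (r β : ℝ) (hr : 0 < r) (hβ0 : 0 < β) (hβ1 : β < 1)
    (htail : μ {ω | r < wDist Pstar (Phat ω)} ≤ ENNReal.ofReal β) :
    ENNReal.ofReal (1 - β) ≤
      μ {ω | (∫ ξ, h (xhat ω) ξ ∂Pstar) - (⨅ x, ∫ ξ, h x ξ ∂Pstar) ≤
               ε * (⨅ x, ∫ ξ, h x ξ ∂Pstar) + (2 + ε) * L * r} :=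
  high_probability_generalization_bound_general hN μ h L hL hLip Pstar hPstarmom ξs Phat hPhat ε hε
    τ hτ hfin xhat khat hfeas r β hβ0 htail
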